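/- Bounded renaming preserves semantics: if y does not occur in φ, then φ ↔ subb_{x→y}(φ) is valid, i.e., for every AML structure and valuation, ē(φ) = ē(subb_{x→y}(φ)), where subb_{x→y}(φ) replaces every bound occurrence of element variable x with y. -/
import Mathlib


inductive Pattern (σ : Type) : Type where
  | evar : ℕ → Pattern σ
  | svar : ℕ → Pattern σ
  | const : σ → Pattern σ
  | app : Pattern σ → Pattern σ → Pattern σ
  | imp : Pattern σ → Pattern σ → Pattern σ
  | ex : ℕ → Pattern σ → Pattern σ
  | mu : ℕ → Pattern σ → Pattern σ

structure AMLStructure (σ : Type) (A : Type) : Type where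
  app : A → A → Set A
  interp : σ → Set A

def AMLStructure.sapp {σ A : Type} (S : AMLStructure σ A) (B C : Set A) : Set A :=
  ⋃ b ∈ B, ⋃ c ∈ C, S.app b c

structure Val (A : Type) : Type where
  e : ℕ → A
  s : ℕ → Set A

def Val.updE {A : Type} (v : Val A) (x : ℕ) (a : A) : Val A :=
  ⟨fun y => if y = x then a else v.e y, v.s⟩

def Val.updS {A : Type} (v : Val A) (X : ℕ) (B : Set A) : Val A :=
  ⟨v.e, fun Y => if Y = X then B else v.s Y⟩

def eval {σ A : Type} (S : AMLStructure σ A) : Pattern σ → Val A → Set A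
  | .evar n, v => {v.e n}
  | .svar n, v => v.s n
  | .const c, _ => S.interp c
  | .app φ ψ, v => S.sapp (eval S φ v) (eval S ψ v)
  | .imp φ ψ, v => (eval S φ v \ eval S ψ v)ᶜ
  | .ex x φ, v => ⋃ a : A, eval S φ (v.updE x a)
  | .mu X φ, v => ⋂₀ {B | eval S φ (v.updS X B) ⊆ B}

def fv {σ : Type} : Pattern σ → Set (ℕ ⊕ ℕ)
  | .evar n => {Sum.inl n}
  | .svar n => {Sum.inr n}
  | .const _ => ∅
  | .app φ ψ => fv φ ∪ fv ψ
  | .imp φ ψ => fv φ ∪ fv ψ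
  | .ex x φ => fv φ \ {Sum.inl x}
  | .mu X φ => fv φ \ {Sum.inr X}

def botP {σ : Type} : Pattern σ := .mu 0 (.svar 0)
def negP {σ : Type} (φ : Pattern σ) : Pattern σ := .imp φ botP
def topP {σ : Type} : Pattern σ := negP botP
def orP {σ : Type} (φ ψ : Pattern σ) : Pattern σ := .imp (negP φ) ψ
def andP {σ : Type} (φ ψ : Pattern σ) : Pattern σ := negP (orP (negP φ) (negP ψ))
def iffP {σ : Type} (φ ψ : Pattern σ) : Pattern σ := andP (.imp φ ψ) (.imp ψ φ)
def allP {σ : Type} (x : ℕ) (φ : Pattern σ) : Pattern σ := negP (.ex x (negP φ))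

def substS {σ : Type} (δ : Pattern σ) (X : ℕ) : Pattern σ → Pattern σ
  | .evar n => .evar n
  | .svar Y => if Y = X then δ else .svar Y
  | .const c => .const c
  | .app φ ψ => .app (substS δ X φ) (substS δ X ψ)
  | .imp φ ψ => .imp (substS δ X φ) (substS δ X ψ)
  | .ex x φ => .ex x (substS δ X φ)
  | .mu Z φ => if Z = X then .mu Z φ else .mu Z (substS δ X φ)

def substE {σ : Type} (δ : Pattern σ) (x : ℕ) : Pattern σ → Pattern σ
  | .evar n => if n = x then δ else .evar n
  | .svar Y => .svar Y
  | .const c => .const c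
  | .app φ ψ => .app (substE δ x φ) (substE δ x ψ)
  | .imp φ ψ => .imp (substE δ x φ) (substE δ x ψ)
  | .ex z φ => if z = x then .ex z φ else .ex z (substE δ x φ)
  | .mu Z φ => .mu Z (substE δ x φ)

def freeForS {σ : Type} (δ : Pattern σ) (X : ℕ) : Pattern σ → Prop
  | .evar _ => True
  | .svar _ => True
  | .const _ => True
  | .app φ ψ => freeForS δ X φ ∧ freeForS δ X ψ
  | .imp φ ψ => freeForS δ X φ ∧ freeForS δ X ψ
  | .ex z φ => (Sum.inr X ∈ fv φ → Sum.inl z ∉ fv δ) ∧ freeForS δ X φ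
  | .mu Z φ => Z = X ∨ ((Sum.inr X ∈ fv φ → Sum.inr Z ∉ fv δ) ∧ freeForS δ X φ)

def freeForE {σ : Type} (δ : Pattern σ) (x : ℕ) : Pattern σ → Prop
  | .evar _ => True
  | .svar _ => True
  | .const _ => True
  | .app φ ψ => freeForE δ x φ ∧ freeForE δ x ψ
  | .imp φ ψ => freeForE δ x φ ∧ freeForE δ x ψ
  | .ex z φ => z = x ∨ ((Sum.inl x ∈ fv φ → Sum.inl z ∉ fv δ) ∧ freeForE δ x φ)
  | .mu Z φ => (Sum.inl x ∈ fv φ → Sum.inr Z ∉ fv δ) ∧ freeForE δ x φ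

def subb {σ : Type} (x y : ℕ) : Pattern σ → Pattern σ
  | .evar n => .evar n
  | .svar Y => .svar Y
  | .const c => .const c
  | .app φ ψ => .app (subb x y φ) (subb x y ψ)
  | .imp φ ψ => .imp (subb x y φ) (subb x y ψ)
  | .ex z φ => if z = x then .ex y (substE (.evar y) x (subb x y φ)) else .ex z (subb x y φ)
  | .mu Z φ => .mu Z (subb x y φ)

def occursE {σ : Type} (y : ℕ) : Pattern σ → Prop
  | .evar n => n = y
  | .svar _ => False
  | .const _ => False
  | .app φ ψ => occursE y φ ∨ occursE y ψ
  | .imp φ ψ => occursE y φ ∨ occursE y ψ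
  | .ex z φ => z = y ∨ occursE y φ
  | .mu _ φ => occursE y φ

mutual
def positiveIn {σ : Type} (X : ℕ) : Pattern σ → Prop
  | .evar _ => True
  | .svar _ => True
  | .const _ => True
  | .app φ ψ => positiveIn X φ ∧ positiveIn X ψ
  | .imp φ ψ => negativeIn X φ ∧ positiveIn X ψ
  | .ex _ φ => positiveIn X φ
  | .mu Z φ => Z = X ∨ positiveIn X φ

def negativeIn {σ : Type} (X : ℕ) : Pattern σ → Prop
  | .evar _ => True
  | .svar Y => Y ≠ X
  | .const _ => True
  | .app φ ψ => negativeIn X φ ∧ negativeIn X ψ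
  | .imp φ ψ => positiveIn X φ ∧ negativeIn X ψ
  | .ex _ φ => negativeIn X φ
  | .mu Z φ => Z = X ∨ negativeIn X φ
end

def nuP {σ : Type} (X : ℕ) (φ : Pattern σ) : Pattern σ :=
  negP (.mu X (negP (substS (negP (.svar X)) X φ)))

inductive Ctx (σ : Type) : Type where
  | hole : Ctx σ
  | appL : Ctx σ → Pattern σ → Ctx σ
  | appR : Pattern σ → Ctx σ → Ctx σ

def Ctx.plug {σ : Type} : Ctx σ → Pattern σ → Pattern σ
  | .hole, δ => δ
  | .appL C ψ, δ => .app (C.plug δ) ψ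
  | .appR ψ C, δ => .app ψ (C.plug δ)

lemma eval_congr {σ A : Type} (S : AMLStructure σ A) (φ : Pattern σ) :
    ∀ v w : Val A, (∀ n, Sum.inl n ∈ fv φ → v.e n = w.e n) →
    (∀ n, Sum.inr n ∈ fv φ → v.s n = w.s n) → eval S φ v = eval S φ w := by
  induction φ with
  | evar n => intro v w he _; simp [eval, he n (by simp [fv])]
  | svar n => intro v w _ hs; simp [eval, hs n (by simp [fv])]
  | const c => intro v w _ _; rfl
  | app φ ψ ih1 ih2 =>
    intro v w he hs
    simp only [eval]
    rw [ih1 v w (fun n h => he n (Or.inl h)) (fun n h => hs n (Or.inl h)),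
        ih2 v w (fun n h => he n (Or.inr h)) (fun n h => hs n (Or.inr h))]
  | imp φ ψ ih1 ih2 =>
    intro v w he hs
    simp only [eval]
    rw [ih1 v w (fun n h => he n (Or.inl h)) (fun n h => hs n (Or.inl h)),
        ih2 v w (fun n h => he n (Or.inr h)) (fun n h => hs n (Or.inr h))]
  | ex z φ ih =>
    intro v w he hs
    simp only [eval]
    refine Set.iUnion_congr fun a => ?_
    apply ih
    · intro n hn
      simp only [Val.updE]
      by_cases hnz : n = z
      · simp [hnz]
      · simp only [if_neg hnz]
        exact he n (by simp [fv, hn, hnz])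
    · intro n hn
      exact hs n (by simp [fv, hn])
  | mu Z φ ih =>
    intro v w he hs
    simp only [eval]
    refine congrArg Set.sInter ?_
    ext B
    simp only [Set.mem_setOf_eq]
    rw [ih (v.updS Z B) (w.updS Z B)
      (fun n hn => he n (by simp [fv, hn]))
      (fun n hn => by
        simp only [Val.updS]
        by_cases hnZ : n = Z
        · simp [hnZ]
        · simp only [if_neg hnZ]
          exact hs n (by simp [fv, hn, hnZ]))]

lemma substE_not_free {σ : Type} (δ : Pattern σ) (x : ℕ) (φ : Pattern σ)
    (h : Sum.inl x ∉ fv φ) : substE δ x φ = φ := by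
  induction φ with
  | evar n =>
    simp only [fv, Set.mem_singleton_iff] at h
    simp only [substE]
    rw [if_neg (fun hn => h (by rw [hn]))]
  | svar Y => rfl
  | const c => rfl
  | app φ ψ ih1 ih2 =>
    simp only [fv, Set.mem_union] at h
    push_neg at h
    simp [substE, ih1 h.1, ih2 h.2]
  | imp φ ψ ih1 ih2 =>
    simp only [fv, Set.mem_union] at h
    push_neg at h
    simp [substE, ih1 h.1, ih2 h.2]
  | ex z φ ih =>
    by_cases hz : z = x
    · simp [substE, hz]
    · simp only [fv, Set.mem_diff, Set.mem_singleton_iff] at h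
      have : Sum.inl x ∉ fv φ := fun hx => h ⟨hx, fun h' => hz ((Sum.inl.inj h').symm)⟩
      simp [substE, hz, ih this]
  | mu Z φ ih =>
    simp only [fv, Set.mem_diff, Set.mem_singleton_iff] at h
    have : Sum.inl x ∉ fv φ := fun hx => h ⟨hx, by simp⟩
    simp [substE, ih this]

lemma fv_substE {σ : Type} (y x : ℕ) (φ : Pattern σ) :
    fv (substE (Pattern.evar y) x φ) ⊆ (fv φ \ {Sum.inl x}) ∪ {Sum.inl y} := by
  induction φ with
  | evar n =>
    by_cases hn : n = x
    · simp [substE, hn, fv]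
    · simp only [substE, if_neg hn, fv]
      intro a ha
      refine Or.inl ⟨ha, ?_⟩
      simp only [Set.mem_singleton_iff] at ha ⊢
      rw [ha]; exact fun h => hn (Sum.inl.inj h)
  | svar Y =>
    intro a ha
    refine Or.inl ⟨ha, ?_⟩
    subst ha; simp
  | const c => simp [substE, fv]
  | app φ ψ ih1 ih2 =>
    simp only [substE, fv]
    intro a ha
    rcases ha with h | h
    · rcases ih1 h with ⟨h1, h2⟩ | h1
      · exact Or.inl ⟨Or.inl h1, h2⟩
      · exact Or.inr h1
    · rcases ih2 h with ⟨h1, h2⟩ | h1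
      · exact Or.inl ⟨Or.inr h1, h2⟩
      · exact Or.inr h1
  | imp φ ψ ih1 ih2 =>
    simp only [substE, fv]
    intro a ha
    rcases ha with h | h
    · rcases ih1 h with ⟨h1, h2⟩ | h1
      · exact Or.inl ⟨Or.inl h1, h2⟩
      · exact Or.inr h1
    · rcases ih2 h with ⟨h1, h2⟩ | h1
      · exact Or.inl ⟨Or.inr h1, h2⟩
      · exact Or.inr h1
  | ex z φ ih =>
    by_cases hz : z = x
    · simp only [substE, if_pos hz, hz, fv]
      intro a ha
      exact Or.inl ⟨ha, ha.2⟩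
    · simp only [substE, if_neg hz, fv]
      intro a ⟨ha, hz'⟩
      rcases ih ha with ⟨h1, h2⟩ | h1
      · exact Or.inl ⟨⟨h1, hz'⟩, h2⟩
      · exact Or.inr h1
  | mu Z φ ih =>
    simp only [substE, fv]
    intro a ⟨ha, hZ⟩
    rcases ih ha with ⟨h1, h2⟩ | h1
    · exact Or.inl ⟨⟨h1, hZ⟩, h2⟩
    · exact Or.inr h1

lemma fv_subb {σ : Type} (x y : ℕ) (φ : Pattern σ) :
    fv (subb x y φ) ⊆ fv φ := by
  induction φ with
  | evar n => simp [subb]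
  | svar Y => simp [subb]
  | const c => simp [subb]
  | app φ ψ ih1 ih2 =>
    simp only [subb, fv]
    exact Set.union_subset_union ih1 ih2
  | imp φ ψ ih1 ih2 =>
    simp only [subb, fv]
    exact Set.union_subset_union ih1 ih2
  | ex z φ ih =>
    by_cases hz : z = x
    · simp only [subb, if_pos hz, hz, fv]
      intro a ⟨ha, hy⟩
      rcases fv_substE y x _ ha with ⟨h1, h2⟩ | h1
      · exact ⟨ih h1, h2⟩
      · exact absurd h1 hy
    · simp only [subb, if_neg hz, fv]
      exact Set.diff_subset_diff_left ih
  | mu Z φ ih =>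
    simp only [subb, fv]
    exact Set.diff_subset_diff_left ih

lemma not_occursE_not_fv {σ : Type} (y : ℕ) (φ : Pattern σ)
    (h : ¬ occursE y φ) : Sum.inl y ∉ fv φ := by
  induction φ with
  | evar n =>
    simp only [occursE] at h
    simp only [fv, Set.mem_singleton_iff]
    intro hn; exact h (Sum.inl.inj hn).symm
  | svar Y => simp [fv]
  | const c => simp [fv]
  | app φ ψ ih1 ih2 =>
    simp only [occursE] at h; push_neg at h
    simp only [fv, Set.mem_union]
    push_neg
    exact ⟨ih1 h.1, ih2 h.2⟩
  | imp φ ψ ih1 ih2 =>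
    simp only [occursE] at h; push_neg at h
    simp only [fv, Set.mem_union]
    push_neg
    exact ⟨ih1 h.1, ih2 h.2⟩
  | ex z φ ih =>
    simp only [occursE] at h; push_neg at h
    simp only [fv, Set.mem_diff]
    intro ⟨h1, _⟩; exact ih h.2 h1
  | mu Z φ ih =>
    simp only [occursE] at h
    simp only [fv, Set.mem_diff]
    intro ⟨h1, _⟩; exact ih h h1

lemma freeForE_of_not_free {σ : Type} (δ : Pattern σ) (x : ℕ) (φ : Pattern σ)
    (h : Sum.inl x ∉ fv φ) : freeForE δ x φ := by
  induction φ with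
  | evar n => trivial
  | svar Y => trivial
  | const c => trivial
  | app φ ψ ih1 ih2 =>
    simp only [fv, Set.mem_union] at h; push_neg at h
    exact ⟨ih1 h.1, ih2 h.2⟩
  | imp φ ψ ih1 ih2 =>
    simp only [fv, Set.mem_union] at h; push_neg at h
    exact ⟨ih1 h.1, ih2 h.2⟩
  | ex z φ ih =>
    by_cases hz : z = x
    · exact Or.inl hz
    · simp only [fv, Set.mem_diff, Set.mem_singleton_iff] at h
      have hx : Sum.inl x ∉ fv φ :=
        fun hx => h ⟨hx, fun h' => hz ((Sum.inl.inj h').symm)⟩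
      exact Or.inr ⟨fun h' => absurd h' hx, ih hx⟩
  | mu Z φ ih =>
    simp only [fv, Set.mem_diff, Set.mem_singleton_iff] at h
    have hx : Sum.inl x ∉ fv φ := fun hx => h ⟨hx, by simp⟩
    exact ⟨fun h' => absurd h' hx, ih hx⟩

lemma freeForE_subb {σ : Type} (x y : ℕ) (φ : Pattern σ)
    (hy : ¬ occursE y φ) : freeForE (Pattern.evar y : Pattern σ) x (subb x y φ) := by
  induction φ with
  | evar n => trivial
  | svar Y => trivial
  | const c => trivial
  | app φ ψ ih1 ih2 =>
    simp only [occursE] at hy; push_neg at hy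
    exact ⟨ih1 hy.1, ih2 hy.2⟩
  | imp φ ψ ih1 ih2 =>
    simp only [occursE] at hy; push_neg at hy
    exact ⟨ih1 hy.1, ih2 hy.2⟩
  | ex z φ ih =>
    simp only [occursE] at hy; push_neg at hy
    by_cases hz : z = x
    · simp only [subb, if_pos hz]
      by_cases hyx : y = x
      · exact Or.inl hyx
      · refine Or.inr ⟨fun hx => absurd hx ?_, ?_⟩
        · intro hx
          rcases fv_substE y x (subb x y φ) hx with ⟨_, h2⟩ | h1
          · exact h2 rfl
          · simp only [Set.mem_singleton_iff] at h1
            exact hyx (Sum.inl.inj h1).symm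
        · apply freeForE_of_not_free
          intro hx
          rcases fv_substE y x (subb x y φ) hx with ⟨_, h2⟩ | h1
          · exact h2 rfl
          · simp only [Set.mem_singleton_iff] at h1
            exact hyx (Sum.inl.inj h1).symm
    · simp only [subb, if_neg hz]
      refine Or.inr ⟨fun _ => ?_, ih hy.2⟩
      simp only [fv, Set.mem_singleton_iff]
      intro h; exact hy.1 (Sum.inl.inj h)
  | mu Z φ ih =>
    simp only [occursE] at hy
    simp only [subb]
    exact ⟨fun _ => by simp [fv], ih hy⟩

lemma substE_evar_eval {σ A : Type} (S : AMLStructure σ A) (y x : ℕ) (φ : Pattern σ) :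
    ∀ v : Val A, freeForE (Pattern.evar y : Pattern σ) x φ →
    eval S (substE (Pattern.evar y) x φ) v = eval S φ (v.updE x (v.e y)) := by
  induction φ with
  | evar n =>
    intro v _
    by_cases hn : n = x
    · simp [substE, hn, eval, Val.updE]
    · simp [substE, hn, eval, Val.updE]
  | svar Y => intro v _; rfl
  | const c => intro v _; rfl
  | app φ ψ ih1 ih2 =>
    intro v hf
    simp only [substE, eval, ih1 v hf.1, ih2 v hf.2]
  | imp φ ψ ih1 ih2 =>
    intro v hf
    simp only [substE, eval, ih1 v hf.1, ih2 v hf.2]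
  | ex z φ ih =>
    intro v hf
    by_cases hz : z = x
    · subst hz
      simp only [substE, if_pos rfl, eval]
      refine Set.iUnion_congr fun a => ?_
      apply eval_congr
      · intro n _
        simp only [Val.updE]
        by_cases hn : n = z <;> simp [hn]
      · intro n _; rfl
    · rcases hf with h | ⟨h1, h2⟩
      · exact absurd h hz
      · simp only [substE, if_neg hz, eval]
        refine Set.iUnion_congr fun a => ?_
        rw [ih _ h2]
        by_cases hx : Sum.inl x ∈ fv φ
        · have hzy : z ≠ y := fun h => (h1 hx) (by simp [fv, h])
          apply eval_congr
          · intro n _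
            simp only [Val.updE]
            by_cases hnx : n = x
            · simp only [if_pos hnx]
              have hnz : ¬ n = z := by omega
              have hyz : ¬ y = z := fun h => hzy h.symm
              simp [hnx, hnz, hyz, show ¬ x = z from fun h => hz h.symm]
            · simp only [if_neg hnx]
          · intro n _; rfl
        · apply eval_congr
          · intro n hn
            have hnx : ¬ n = x := fun h => hx (h ▸ hn)
            simp only [Val.updE]
            by_cases hnz : n = z <;> simp [hnz, hnx, hz]
          · intro n _; rfl
  | mu Z φ ih =>
    intro v hf
    simp only [substE, eval]
    refine congrArg Set.sInter ?_
    ext B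
    simp only [Set.mem_setOf_eq]
    rw [ih _ hf.2]
    have : (Val.updS v Z B).updE x ((Val.updS v Z B).e y) = (v.updE x (v.e y)).updS Z B := rfl
    rw [this]

theorem subb_eval_eq {σ A : Type} [Nonempty A] (φ : Pattern σ) (x y : ℕ)
    (hy : ¬ occursE y φ) (S : AMLStructure σ A) (v : Val A) :
    eval S φ v = eval S (subb x y φ) v := by
  induction φ generalizing v with
  | evar n => rfl
  | svar Y => rfl
  | const c => rfl
  | app φ ψ ih1 ih2 =>
    simp only [occursE] at hy; push_neg at hy
    simp only [subb, eval, ih1 hy.1, ih2 hy.2]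
  | imp φ ψ ih1 ih2 =>
    simp only [occursE] at hy; push_neg at hy
    simp only [subb, eval, ih1 hy.1, ih2 hy.2]
  | ex z φ ih =>
    simp only [occursE] at hy; push_neg at hy
    by_cases hz : z = x
    · subst hz
      simp only [subb, if_pos rfl, eval]
      refine Set.iUnion_congr fun a => ?_
      rw [substE_evar_eval S y z (subb z y φ) _ (freeForE_subb z y φ hy.2)]
      rw [ih hy.2]
      apply eval_congr
      · intro n hn
        simp only [Val.updE]
        by_cases hnz : n = z
        · simp [hnz]
        · simp only [if_neg hnz]
          by_cases hny : n = y
          · rw [hny] at hn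
            exact absurd (fv_subb z y φ hn) (not_occursE_not_fv y φ hy.2)
          · simp [hny]
      · intro n _; rfl
    · simp only [subb, if_neg hz, eval]
      refine Set.iUnion_congr fun a => ?_
      exact ih hy.2 _
  | mu Z φ ih =>
    simp only [occursE] at hy
    simp only [subb, eval]
    refine congrArg Set.sInter ?_
    ext B
    simp only [Set.mem_setOf_eq]
    rw [ih hy _]
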